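/- arXiv:1701.08891 — 5 statements merged into one kernel-verified Lean document; each statement's English description precedes it below -/
import Mathlib

section
/- There exists a unique γ† > 0 such that h(γ†) = 0, where h(γ) = 2γ² + γ − (1+γ)² ln(1+γ); moreover h(γ) > 0 for 0 < γ < γ† and h(γ) < 0 for γ > γ†. -/
/-!
Write `h' = (1 + γ) k` with `k γ = 3γ/(1+γ) - 2 log(1+γ)`. Since `k' = (1 - 2γ)/(1+γ)²`,
`k` rises from `k 0 = 0` up to `γ = 1/2` and then falls, and `k 2 < 0`; so `k` changes sign
exactly once on `(0, ∞)`, at some `γ₁ ∈ (1/2, 2)`. Then `h` has the same shape: `h 0 = 0`,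
`h` rises up to `γ₁` and falls afterwards, and `h 3 < 0`; so `h` also changes sign exactly
once on `(0, ∞)`, which is the point `γ†`.
-/

open Real Set

def SignChangeAt (f : ℝ → ℝ) (r : ℝ) : Prop :=
  (∀ x, 0 < x → x < r → 0 < f x) ∧ ∀ x, r < x → f x < 0

namespace SignChangeAt

variable {f f' : ℝ → ℝ} {r c b : ℝ}

lemma eq_of_apply_eq_zero (hf : SignChangeAt f r) {x : ℝ} (hx : 0 < x) (hfx : f x = 0) :
    x = r := by
  rcases lt_trichotomy x r with hlt | heq | hgt
  · exact absurd hfx (hf.1 x hx hlt).ne'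
  · exact heq
  · exact absurd hfx (hf.2 x hgt).ne

lemma mul_of_pos {g : ℝ → ℝ} (hf : SignChangeAt f r) (hr : 0 ≤ r)
    (hg : ∀ x, 0 < x → 0 < g x) : SignChangeAt (fun x => g x * f x) r :=
  ⟨fun x hx hxr => mul_pos (hg x hx) (hf.1 x hx hxr),
    fun x hx => mul_neg_of_pos_of_neg (hg x (hr.trans_lt hx)) (hf.2 x hx)⟩

lemma exists_of_hasDerivAt (hc : 0 < c) (hf : ∀ x, 0 ≤ x → HasDerivAt f (f' x) x)
    (h0 : f 0 = 0) (hf' : SignChangeAt f' c) (hcb : c ≤ b) (hb : f b < 0) :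
    ∃ r ∈ Ioo c b, f r = 0 ∧ SignChangeAt f r := by
  have hcont : ContinuousOn f (Ici 0) := fun x hx => (hf x hx).continuousAt.continuousWithinAt
  have hderiv : ∀ D ⊆ Ici 0, ∀ x ∈ interior D, HasDerivWithinAt f (f' x) (interior D) x :=
    fun D hD x hx => (hf x (hD (interior_subset hx))).hasDerivWithinAt
  have hmono : StrictMonoOn f (Icc 0 c) :=
    strictMonoOn_of_hasDerivWithinAt_pos (convex_Icc 0 c) (hcont.mono Icc_subset_Ici_self)
      (hderiv _ Icc_subset_Ici_self) fun x hx => by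
        rw [interior_Icc] at hx; exact hf'.1 x hx.1 hx.2
  have hanti : StrictAntiOn f (Ici c) :=
    strictAntiOn_of_hasDerivWithinAt_neg (convex_Ici c) (hcont.mono (Ici_subset_Ici.2 hc.le))
      (hderiv _ (Ici_subset_Ici.2 hc.le)) fun x hx => by
        rw [interior_Ici] at hx; exact hf'.2 x hx
  have hfc : 0 < f c := h0 ▸ hmono (left_mem_Icc.2 hc.le) (right_mem_Icc.2 hc.le) hc
  obtain ⟨r, hr, hfr⟩ := intermediate_value_Ioo' hcb
    (hcont.mono fun x hx => hc.le.trans hx.1) ⟨hb, hfc⟩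
  refine ⟨r, hr, hfr, fun x hx hxr => ?_, fun x hx => ?_⟩
  · rcases le_or_gt x c with hxc | hxc
    · exact h0 ▸ hmono (left_mem_Icc.2 hc.le) ⟨hx.le, hxc⟩ hx
    · exact hfr ▸ hanti hxc.le (hxc.trans hxr).le hxr
  · exact hfr ▸ hanti hr.1.le (hr.1.trans hx).le hx

end SignChangeAt

namespace Threshold

noncomputable def h (γ : ℝ) : ℝ := 2 * γ ^ 2 + γ - (1 + γ) ^ 2 * log (1 + γ)

noncomputable def k (γ : ℝ) : ℝ := 3 * γ / (1 + γ) - 2 * log (1 + γ)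

lemma hasDerivAt_k {γ : ℝ} (hγ : -1 < γ) :
    HasDerivAt k ((1 - 2 * γ) / (1 + γ) ^ 2) γ := by
  have hne : 1 + γ ≠ 0 := by linarith
  have hlin : HasDerivAt (fun x => 1 + x) 1 γ := (hasDerivAt_id γ).const_add 1
  have := (((hasDerivAt_id γ).const_mul 3).div hlin hne).sub ((hlin.log hne).const_mul 2)
  refine this.congr_deriv ?_
  simp only [id]
  field_simp
  ring

lemma hasDerivAt_h {γ : ℝ} (hγ : -1 < γ) : HasDerivAt h ((1 + γ) * k γ) γ := by
  have hne : 1 + γ ≠ 0 := by linarith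
  have hlin : HasDerivAt (fun x => 1 + x) 1 γ := (hasDerivAt_id γ).const_add 1
  have := ((((hasDerivAt_id γ).pow 2).const_mul 2).add (hasDerivAt_id γ)).sub
    ((hlin.pow 2).mul (hlin.log hne))
  refine this.congr_deriv ?_
  simp only [k, id, Pi.pow_apply]
  field_simp
  ring

lemma signChangeAt_deriv_k : SignChangeAt (fun γ => (1 - 2 * γ) / (1 + γ) ^ 2) (1 / 2) :=
  ⟨fun γ hγ hγ' => div_pos (by linarith) (by positivity),
    fun γ hγ => div_neg_of_neg_of_pos (by linarith) (by positivity)⟩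

lemma k_two_neg : k 2 < 0 := by
  have : 1 < log 3 := by
    rw [lt_log_iff_exp_lt (by norm_num)]
    linarith [exp_one_lt_d9]
  norm_num [k]
  linarith

lemma h_three_neg : h 3 < 0 := by
  have : log 4 = 2 * log 2 := by
    rw [show (4 : ℝ) = 2 ^ 2 by norm_num, log_pow]
    norm_num
  norm_num [h, this]
  linarith [log_two_gt_d9]

end Threshold

theorem stmt5 (h : ℝ → ℝ)
    (hh : ∀ γ : ℝ, h γ = 2 * γ ^ 2 + γ - (1 + γ) ^ 2 * Real.log (1 + γ)) :
    ∃ γd : ℝ, 0 < γd ∧ h γd = 0 ∧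
      (∀ γ : ℝ, 0 < γ → γ < γd → 0 < h γ) ∧
      (∀ γ : ℝ, γd < γ → h γ < 0) ∧
      (∀ γ' : ℝ, 0 < γ' → h γ' = 0 → γ' = γd) := by
  obtain rfl : h = Threshold.h := funext hh
  obtain ⟨γ₁, hγ₁_mem, -, hk⟩ := SignChangeAt.exists_of_hasDerivAt (by norm_num)
    (fun γ hγ => Threshold.hasDerivAt_k (by linarith)) (by simp [Threshold.k])
    Threshold.signChangeAt_deriv_k (by norm_num) Threshold.k_two_neg
  have hγ₁ : 0 < γ₁ ∧ γ₁ ≤ 3 := ⟨by linarith [hγ₁_mem.1], by linarith [hγ₁_mem.2]⟩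
  obtain ⟨γd, hγd, hγd₀, hsign⟩ := SignChangeAt.exists_of_hasDerivAt hγ₁.1
    (fun γ hγ => Threshold.hasDerivAt_h (by linarith)) (by simp [Threshold.h])
    (hk.mul_of_pos hγ₁.1.le fun γ hγ => by linarith) hγ₁.2 Threshold.h_three_neg
  exact ⟨γd, hγ₁.1.trans hγd.1, hγd₀, hsign.1, hsign.2,
    fun γ hγ hγ₀ => hsign.eq_of_apply_eq_zero hγ hγ₀⟩
end

section
/- There exists γ† > 0 such that g(γ) = ln(1+γ)/γ − 1/(1+γ) is strictly increasing on (0, γ†) and strictly decreasing on (γ†, ∞). -/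
/-!
Writing `g'(γ) = N(γ) / γ²` with `N(γ) = γ / (1 + γ) + γ² / (1 + γ)² - log (1 + γ)`, one finds
`N(0) = 0` and `N'(γ) = γ (1 - γ) / (1 + γ)³`. So `N` rises on `[0, 1]` and falls on `[1, ∞)`,
and it tends to `-∞` since its rational part stays below `2`. Hence `N` has a single zero `γ† > 1`,
positive before it and negative after it, and `γ†` is where `g` turns from increasing to decreasing.
-/

open Real Set

noncomputable def gNumer (x : ℝ) : ℝ := x / (1 + x) + x ^ 2 / (1 + x) ^ 2 - log (1 + x)

lemma hasDerivAt_log_one_add {x : ℝ} (hx : 1 + x ≠ 0) :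
    HasDerivAt (fun y ↦ log (1 + y)) (1 + x)⁻¹ x := by
  simpa using ((hasDerivAt_id x).const_add 1).log hx

lemma hasDerivAt_gNumer {x : ℝ} (hx : 1 + x ≠ 0) :
    HasDerivAt gNumer (x * (1 - x) / (1 + x) ^ 3) x := by
  have h1 : HasDerivAt (fun y : ℝ ↦ 1 + y) 1 x := (hasDerivAt_id' x).const_add 1
  refine ((((hasDerivAt_id' x).fun_div h1 hx).fun_add
    (((hasDerivAt_id' x).fun_pow 2).fun_div (h1.fun_pow 2) (pow_ne_zero 2 hx))).fun_sub
    (hasDerivAt_log_one_add hx)).congr_deriv ?_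
  field_simp
  ring

lemma hasDerivAt_log_one_add_div_sub_one_div {x : ℝ} (hx : x ≠ 0) (hx1 : 1 + x ≠ 0) :
    HasDerivAt (fun γ ↦ log (1 + γ) / γ - 1 / (1 + γ)) (gNumer x / x ^ 2) x := by
  have h1 : HasDerivAt (fun y : ℝ ↦ 1 + y) 1 x := (hasDerivAt_id' x).const_add 1
  refine (((hasDerivAt_log_one_add hx1).fun_div (hasDerivAt_id' x) hx).fun_sub
    ((hasDerivAt_const x 1).fun_div h1 hx1)).congr_deriv ?_
  rw [gNumer]
  field_simp
  ring

lemma continuousOn_gNumer : ContinuousOn gNumer (Ioi (-1)) := fun x hx ↦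
  (hasDerivAt_gNumer (by linarith [mem_Ioi.mp hx])).continuousAt.continuousWithinAt

lemma gNumer_zero : gNumer 0 = 0 := by simp [gNumer]

lemma strictMonoOn_gNumer : StrictMonoOn gNumer (Icc 0 1) := by
  refine strictMonoOn_of_deriv_pos (convex_Icc 0 1)
    (continuousOn_gNumer.mono fun x hx ↦ mem_Ioi.mpr (by linarith [hx.1])) fun x hx ↦ ?_
  obtain ⟨hx0, hx1⟩ : 0 < x ∧ x < 1 := by rwa [interior_Icc] at hx
  rw [(hasDerivAt_gNumer (by linarith)).deriv]
  exact div_pos (mul_pos hx0 (by linarith)) (by positivity)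

lemma strictAntiOn_gNumer : StrictAntiOn gNumer (Ici 1) := by
  refine strictAntiOn_of_deriv_neg (convex_Ici 1)
    (continuousOn_gNumer.mono fun x hx ↦ mem_Ioi.mpr (by linarith [mem_Ici.mp hx])) fun x hx ↦ ?_
  have hx1 : 1 < x := by rwa [interior_Ici] at hx
  rw [(hasDerivAt_gNumer (by linarith)).deriv]
  exact div_neg_of_neg_of_pos (mul_neg_of_pos_of_neg (by linarith) (by linarith)) (by positivity)

lemma gNumer_lt_two_sub_log {x : ℝ} (hx : 0 ≤ x) : gNumer x < 2 - log (1 + x) := by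
  have h1 : x / (1 + x) < 1 := (div_lt_one (by linarith)).mpr (by linarith)
  have h2 : x ^ 2 / (1 + x) ^ 2 < 1 := by
    rw [← div_pow]
    exact pow_lt_one₀ (by positivity) h1 two_ne_zero
  rw [gNumer]
  linarith

lemma exists_gNumer_eq_zero : ∃ c, 1 < c ∧ gNumer c = 0 := by
  have hpos : 0 < gNumer 1 := by
    simpa [gNumer_zero] using strictMonoOn_gNumer (left_mem_Icc.mpr zero_le_one)
      (right_mem_Icc.mpr zero_le_one) zero_lt_one
  have hB : 1 < exp 2 := one_lt_exp_iff.mpr two_pos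
  have hneg : gNumer (exp 2) < 0 := by
    have := log_lt_log (exp_pos 2) (lt_one_add (exp 2))
    rw [log_exp] at this
    linarith [gNumer_lt_two_sub_log (exp_pos 2).le]
  obtain ⟨c, hc, hc0⟩ := intermediate_value_Icc' hB.le
    (continuousOn_gNumer.mono fun x hx ↦ mem_Ioi.mpr (by linarith [hx.1])) ⟨hneg.le, hpos.le⟩
  refine ⟨c, hc.1.lt_of_ne ?_, hc0⟩
  rintro rfl
  exact hpos.ne' hc0

lemma exists_gNumer_sign_change :
    ∃ c, 1 < c ∧ (∀ x ∈ Ioo 0 c, 0 < gNumer x) ∧ ∀ x ∈ Ioi c, gNumer x < 0 := by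
  obtain ⟨c, hc1, hc0⟩ := exists_gNumer_eq_zero
  refine ⟨c, hc1, fun x ⟨hx0, hxc⟩ ↦ ?_, fun x hx ↦ ?_⟩
  · rcases le_or_gt x 1 with hx1 | hx1
    · simpa [gNumer_zero] using strictMonoOn_gNumer (left_mem_Icc.mpr zero_le_one) ⟨hx0.le, hx1⟩ hx0
    · simpa [hc0] using strictAntiOn_gNumer (mem_Ici.mpr hx1.le) (mem_Ici.mpr hc1.le) hxc
  · simpa [hc0] using strictAntiOn_gNumer (mem_Ici.mpr hc1.le)
      (mem_Ici.mpr (hc1.trans (mem_Ioi.mp hx)).le) hx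

lemma strictMonoOn_log_one_add_div_sub_one_div {s : Set ℝ} (hs : Convex ℝ s) (hs0 : s ⊆ Ioi 0)
    (hN : ∀ x ∈ s, 0 < gNumer x) : StrictMonoOn (fun γ ↦ log (1 + γ) / γ - 1 / (1 + γ)) s := by
  have hd (x) (hx : x ∈ s) := hasDerivAt_log_one_add_div_sub_one_div (hs0 hx).ne'
    (by linarith [mem_Ioi.mp (hs0 hx)])
  refine strictMonoOn_of_hasDerivWithinAt_pos hs
    (fun x hx ↦ (hd x hx).continuousAt.continuousWithinAt)
    (fun x hx ↦ (hd x (interior_subset hx)).hasDerivWithinAt) fun x hx ↦ ?_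
  exact div_pos (hN x (interior_subset hx)) (pow_pos (hs0 (interior_subset hx)) 2)

lemma strictAntiOn_log_one_add_div_sub_one_div {s : Set ℝ} (hs : Convex ℝ s) (hs0 : s ⊆ Ioi 0)
    (hN : ∀ x ∈ s, gNumer x < 0) : StrictAntiOn (fun γ ↦ log (1 + γ) / γ - 1 / (1 + γ)) s := by
  have hd (x) (hx : x ∈ s) := hasDerivAt_log_one_add_div_sub_one_div (hs0 hx).ne'
    (by linarith [mem_Ioi.mp (hs0 hx)])
  refine strictAntiOn_of_hasDerivWithinAt_neg hs
    (fun x hx ↦ (hd x hx).continuousAt.continuousWithinAt)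
    (fun x hx ↦ (hd x (interior_subset hx)).hasDerivWithinAt) fun x hx ↦ ?_
  exact div_neg_of_neg_of_pos (hN x (interior_subset hx)) (pow_pos (hs0 (interior_subset hx)) 2)

theorem stmt10 (g : ℝ → ℝ)
    (hg : ∀ γ : ℝ, g γ = Real.log (1 + γ) / γ - 1 / (1 + γ)) :
    ∃ γd : ℝ, 0 < γd ∧ StrictMonoOn g (Set.Ioo 0 γd) ∧ StrictAntiOn g (Set.Ioi γd) := by
  obtain ⟨c, hc1, hpos, hneg⟩ := exists_gNumer_sign_change
  obtain rfl : g = fun γ ↦ log (1 + γ) / γ - 1 / (1 + γ) := funext hg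
  exact ⟨c, zero_lt_one.trans hc1,
    strictMonoOn_log_one_add_div_sub_one_div (convex_Ioo 0 c) (fun x hx ↦ hx.1) hpos,
    strictAntiOn_log_one_add_div_sub_one_div (convex_Ioi c)
      (fun x hx ↦ zero_lt_one.trans (hc1.trans hx)) hneg⟩
end

section
/- For the unique γ† > 0 with 2γ†² + γ† = (1+γ†)² ln(1+γ†), one has f(γ†) > 0.4675, where f(γ) = ln(1+γ) − γ/(1+γ). -/
/-!
At a root, `log (1 + γ) = (2γ² + γ) / (1 + γ)²`, so `f(γ) = (γ / (1 + γ))²`, which is increasing in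
`γ`; it therefore suffices to show `γ† > 2.1623`, where `(2.1623 / 3.1623)² > 0.4675`.
The function `g(x) = log (1 + x) - (2x² + x) / (1 + x)²` has `g 0 = 0` and derivative
`(x² - x) / (1 + x)³`, so it decreases on `[0, 1]` and increases on `[1, ∞)`. Hence `g < 0` on
`(0, c]` as soon as `g c < 0`, and `g 2.1623 < 0` is a numerical check.
-/

open Real Set

/-- `-h(x) / (1 + x)²`: it has the same positive zeros as `h` and a simpler derivative. -/
noncomputable def normalizedH (x : ℝ) : ℝ := log (1 + x) - (2 * x ^ 2 + x) / (1 + x) ^ 2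

lemma hasDerivAt_normalizedH {x : ℝ} (hx : -1 < x) :
    HasDerivAt normalizedH ((x ^ 2 - x) / (1 + x) ^ 3) x := by
  have hne : (1 : ℝ) + x ≠ 0 := by linarith
  have hshift : HasDerivAt (fun y : ℝ => 1 + y) 1 x := (hasDerivAt_id x).const_add 1
  have hlog : HasDerivAt (fun y : ℝ => log (1 + y)) (1 / (1 + x)) x := by
    simpa [one_div] using hshift.log hne
  have hnum : HasDerivAt (fun y : ℝ => 2 * y ^ 2 + y) (2 * (2 * x) + 1) x := by
    simpa using ((hasDerivAt_pow 2 x).const_mul (2 : ℝ)).fun_add (hasDerivAt_id x)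
  have hden : HasDerivAt (fun y : ℝ => (1 + y) ^ 2) (2 * (1 + x)) x := by
    simpa using hshift.fun_pow 2
  refine (hlog.fun_sub (hnum.fun_div hden (pow_ne_zero 2 hne))).congr_deriv ?_
  field_simp
  ring

lemma continuousOn_normalizedH : ContinuousOn normalizedH (Ici 0) := fun x hx =>
  (hasDerivAt_normalizedH (by linarith [mem_Ici.mp hx])).continuousAt.continuousWithinAt

lemma normalizedH_strictAntiOn : StrictAntiOn normalizedH (Icc 0 1) := by
  refine strictAntiOn_of_deriv_neg (convex_Icc 0 1)
    (continuousOn_normalizedH.mono Icc_subset_Ici_self) fun x hx => ?_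
  rw [interior_Icc] at hx
  rw [(hasDerivAt_normalizedH (by linarith [hx.1])).deriv]
  have : 0 < (1 + x) ^ 3 := by have := hx.1; positivity
  exact div_neg_of_neg_of_pos (by nlinarith [hx.1, hx.2]) this

lemma normalizedH_strictMonoOn : StrictMonoOn normalizedH (Ici 1) := by
  refine strictMonoOn_of_deriv_pos (convex_Ici 1)
    (continuousOn_normalizedH.mono (Ici_subset_Ici.mpr zero_le_one)) fun x hx => ?_
  rw [interior_Ici] at hx
  have hx1 : 1 < x := hx
  rw [(hasDerivAt_normalizedH (by linarith)).deriv]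
  have : 0 < (1 + x) ^ 3 := by positivity
  exact div_pos (by nlinarith) this

lemma normalizedH_neg_of_le {c x : ℝ} (hc : normalizedH c < 0) (hx : 0 < x) (hxc : x ≤ c) :
    normalizedH x < 0 := by
  have hzero : normalizedH 0 = 0 := by simp [normalizedH]
  rcases le_or_gt x 1 with hx1 | hx1
  · rw [← hzero]
    exact normalizedH_strictAntiOn ⟨le_rfl, zero_le_one⟩ ⟨hx.le, hx1⟩ hx
  · exact (normalizedH_strictMonoOn.monotoneOn (mem_Ici.mpr hx1.le)
      (mem_Ici.mpr (hx1.le.trans hxc)) hxc).trans_lt hc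

lemma normalizedH_2_1623_neg : normalizedH 2.1623 < 0 := by
  have hquot : (2 * (2.1623 : ℝ) ^ 2 + 2.1623) / (1 + 2.1623) ^ 2
      = 1151338258 / 1000014129 := by norm_num
  rw [normalizedH, sub_neg, hquot, show (1 : ℝ) + 2.1623 = 3.1623 by norm_num,
    log_lt_iff_lt_exp (by norm_num)]
  calc (3.1623 : ℝ) < ∑ i ∈ Finset.range 11, (1.1513 : ℝ) ^ i / i.factorial := by
        simp only [Finset.sum_range_succ, Finset.sum_range_zero, Nat.factorial]
        norm_num
    _ ≤ exp 1.1513 := sum_le_exp_of_nonneg (by norm_num) 11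
    _ ≤ exp (1151338258 / 1000014129) := exp_le_exp.mpr (by norm_num)

theorem stmt14 (γd : ℝ) (hγd : 0 < γd)
    (hroot : 2 * γd ^ 2 + γd = (1 + γd) ^ 2 * Real.log (1 + γd)) :
    Real.log (1 + γd) - γd / (1 + γd) > 0.4675 := by
  have hne : (1 : ℝ) + γd ≠ 0 := by positivity
  have hlog : log (1 + γd) = (2 * γd ^ 2 + γd) / (1 + γd) ^ 2 := by
    rw [eq_div_iff (pow_ne_zero 2 hne)]
    linarith
  have hlarge : 2.1623 < γd := lt_of_not_ge fun hle =>
    (normalizedH_neg_of_le normalizedH_2_1623_neg hγd hle).ne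
      (sub_eq_zero.mpr hlog)
  have hf : log (1 + γd) - γd / (1 + γd) = γd ^ 2 / (1 + γd) ^ 2 := by
    rw [hlog]
    field_simp
    ring
  rw [hf, gt_iff_lt, lt_div_iff₀ (by positivity)]
  nlinarith
end

section
/- Fix ε with 0 < ε ≤ 1/2 and an integer N ≥ 1. For each integer n with 1 ≤ n ≤ N, let γ(n) > 0 be the unique solution of n·(ln(1+γ) − γ/(1+γ)) = 2ε². Then n·γ(n) is maximized over {1, …, N} at n = N. -/
/-!
Write `f γ = log (1 + γ) - γ / (1 + γ)` and `c = 2ε² ≤ 1/2`. Since `n f(γ n) = c = N f(γ N)` and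
`f` is increasing, `γ N ≤ γ n`, and `n γ n ≤ N γ N` is equivalent to `f(γ N)/γ N ≤ f(γ n)/γ n`.
The ratio `f γ / γ` increases on `(0, 2]`, since there `γ f'(γ) - f(γ) = γ²/(1+γ)² - f(γ) ≥ 0`:
this function rises on `[0, 1]`, falls on `[1, 2]`, and equals `10/9 - log 3 > 0` at `2`.
If `γ n > 2` and `n < N`, then `f(γ n) ≤ 1/2` and `f(γ N) ≤ 1/4` confine `γ n` to `[2, 7/3]` and
`γ N` to `(0, 5/4]`, where the ratio is respectively at least and at most `21/100`.
-/

open Real Set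

-- Twice the Kullback–Leibler divergence `D(𝒩(0, 1) ‖ 𝒩(0, 1 + γ))`.
noncomputable def klGauss (γ : ℝ) : ℝ := log (1 + γ) - γ / (1 + γ)

section MonotoneOfHasDerivAt

variable {D : Set ℝ} {f f' : ℝ → ℝ}

lemma Convex.monotoneOn_of_hasDerivAt_nonneg (hD : Convex ℝ D)
    (hf : ∀ x ∈ D, HasDerivAt f (f' x) x) (hf' : ∀ x ∈ interior D, 0 ≤ f' x) :
    MonotoneOn f D :=
  monotoneOn_of_hasDerivWithinAt_nonneg hD (fun x hx ↦ (hf x hx).continuousAt.continuousWithinAt)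
    (fun x hx ↦ (hf x (interior_subset hx)).hasDerivWithinAt) hf'

lemma Convex.antitoneOn_of_hasDerivAt_nonpos (hD : Convex ℝ D)
    (hf : ∀ x ∈ D, HasDerivAt f (f' x) x) (hf' : ∀ x ∈ interior D, f' x ≤ 0) :
    AntitoneOn f D :=
  antitoneOn_of_hasDerivWithinAt_nonpos hD (fun x hx ↦ (hf x hx).continuousAt.continuousWithinAt)
    (fun x hx ↦ (hf x (interior_subset hx)).hasDerivWithinAt) hf'

lemma Convex.strictMonoOn_of_hasDerivAt_pos (hD : Convex ℝ D)
    (hf : ∀ x ∈ D, HasDerivAt f (f' x) x) (hf' : ∀ x ∈ interior D, 0 < f' x) :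
    StrictMonoOn f D :=
  strictMonoOn_of_hasDerivWithinAt_pos hD (fun x hx ↦ (hf x hx).continuousAt.continuousWithinAt)
    (fun x hx ↦ (hf x (interior_subset hx)).hasDerivWithinAt) hf'

end MonotoneOfHasDerivAt

lemma hasDerivAt_klGauss {γ : ℝ} (hγ : 0 < 1 + γ) :
    HasDerivAt klGauss (γ / (1 + γ) ^ 2) γ := by
  have h1 : HasDerivAt (fun t : ℝ ↦ 1 + t) 1 γ := (hasDerivAt_id γ).const_add 1
  refine ((h1.log hγ.ne').sub ((hasDerivAt_id' γ).div h1 hγ.ne')).congr_deriv ?_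
  field_simp
  ring

lemma klGauss_strictMonoOn : StrictMonoOn klGauss (Ici 0) := by
  refine (convex_Ici 0).strictMonoOn_of_hasDerivAt_pos
    (fun γ hγ ↦ hasDerivAt_klGauss (by linarith [mem_Ici.1 hγ])) fun γ hγ ↦ ?_
  rw [interior_Ici, mem_Ioi] at hγ
  positivity

lemma klGauss_pos {γ : ℝ} (hγ : 0 < γ) : 0 < klGauss γ := by
  simpa [klGauss] using klGauss_strictMonoOn self_mem_Ici hγ.le hγ

lemma klGauss_two : klGauss 2 = log 3 - 2 / 3 := by
  norm_num [klGauss]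

lemma klGauss_five_fourths : klGauss (5 / 4) = 2 * log 3 - 2 * log 2 - 5 / 9 := by
  rw [klGauss, show (1 : ℝ) + 5 / 4 = 3 ^ 2 / 2 ^ 2 by norm_num,
    log_div (by norm_num) (by norm_num), log_pow, log_pow]
  norm_num

lemma klGauss_seven_thirds : klGauss (7 / 3) = log 2 + log 5 - log 3 - 7 / 10 := by
  rw [klGauss, show (1 : ℝ) + 7 / 3 = 2 * 5 / 3 by norm_num,
    log_div (by norm_num) (by norm_num), log_mul (by norm_num) (by norm_num)]
  norm_num

-- `γ²/(1+γ)² = γ · klGauss' γ`, so this is the sign condition making `klGauss γ / γ` increase.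
lemma klGauss_le_sq_div_sq {γ : ℝ} (h0 : 0 ≤ γ) (h2 : γ ≤ 2) :
    klGauss γ ≤ γ ^ 2 / (1 + γ) ^ 2 := by
  set g : ℝ → ℝ := fun t ↦ t ^ 2 / (1 + t) ^ 2 - klGauss t
  have hg : ∀ t, 0 < 1 + t → HasDerivAt g (t * (1 - t) / (1 + t) ^ 3) t := fun t ht ↦ by
    have h1 : HasDerivAt (fun t : ℝ ↦ (1 + t) ^ 2) (2 * (1 + t)) t := by
      simpa using ((hasDerivAt_id t).const_add 1).fun_pow 2
    refine (((hasDerivAt_pow 2 t).div h1 (by positivity)).sub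
      (hasDerivAt_klGauss ht)).congr_deriv ?_
    field_simp
    ring
  suffices 0 ≤ g γ by simpa [g] using this
  rcases le_total γ 1 with h1 | h1
  · have hmono : MonotoneOn g (Icc 0 1) :=
      (convex_Icc 0 1).monotoneOn_of_hasDerivAt_nonneg (fun t ht ↦ hg t (by linarith [ht.1]))
        fun t ht ↦ by
          rw [interior_Icc] at ht
          exact div_nonneg (mul_nonneg ht.1.le (by linarith [ht.2]))
            (pow_nonneg (by linarith [ht.1]) 3)
    simpa [g, klGauss] using hmono ⟨le_rfl, zero_le_one⟩ ⟨h0, h1⟩ h0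
  · have hanti : AntitoneOn g (Icc 1 2) :=
      (convex_Icc 1 2).antitoneOn_of_hasDerivAt_nonpos (fun t ht ↦ hg t (by linarith [ht.1]))
        fun t ht ↦ by
          rw [interior_Icc] at ht
          exact div_nonpos_of_nonpos_of_nonneg (by nlinarith [ht.1])
            (pow_nonneg (by linarith [ht.1]) 3)
    have hg2 : 0 ≤ g 2 := by
      simp only [g, klGauss_two]
      linarith [log_three_lt_d9]
    exact hg2.trans (hanti ⟨h1, h2⟩ ⟨one_le_two, le_rfl⟩ h2)

lemma klGauss_div_monotoneOn : MonotoneOn (fun γ ↦ klGauss γ / γ) (Ioc 0 2) := by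
  refine (convex_Ioc 0 2).monotoneOn_of_hasDerivAt_nonneg
    (fun γ hγ ↦ (hasDerivAt_klGauss (by linarith [hγ.1])).div (hasDerivAt_id' γ) hγ.1.ne')
    fun γ hγ ↦ ?_
  rw [interior_Ioc] at hγ
  have h := klGauss_le_sq_div_sq hγ.1.le hγ.2.le
  have hsq : γ / (1 + γ) ^ 2 * γ = γ ^ 2 / (1 + γ) ^ 2 := by ring
  rw [mul_one, hsq]
  exact div_nonneg (sub_nonneg.2 h) (sq_nonneg γ)

-- `21/100` is the value of `klGauss' γ = γ/(1+γ)²` at the right end `γ = 7/3`.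
lemma mul_le_klGauss_of_mem_Icc {γ : ℝ} (h2 : 2 ≤ γ) (h7 : γ ≤ 7 / 3) :
    21 / 100 * γ ≤ klGauss γ := by
  have hmono : MonotoneOn (fun t ↦ klGauss t - 21 / 100 * t) (Icc 2 (7 / 3)) := by
    refine (convex_Icc 2 (7 / 3)).monotoneOn_of_hasDerivAt_nonneg
      (fun t ht ↦ (hasDerivAt_klGauss (by linarith [ht.1])).sub ((hasDerivAt_id' t).const_mul _))
      fun t ht ↦ ?_
    rw [interior_Icc] at ht
    have hpos : 0 < (1 + t) ^ 2 := by nlinarith [ht.1]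
    rw [mul_one, sub_nonneg, le_div_iff₀ hpos]
    nlinarith [ht.1, ht.2]
  have h := hmono ⟨le_rfl, by norm_num⟩ ⟨h2, h7⟩ h2
  simp only [klGauss_two] at h
  linarith [log_three_gt_d9]

lemma klGauss_div_le_of_le_quarter {x y : ℝ} (hy : 0 < y) (hfy : klGauss y ≤ 1 / 4)
    (hx : 2 ≤ x) (hfx : klGauss x ≤ 1 / 2) : klGauss y / y ≤ klGauss x / x := by
  have hy54 : y ≤ 5 / 4 := by
    refine (klGauss_strictMonoOn.le_iff_le hy.le (by norm_num)).1 (hfy.trans ?_)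
    rw [klGauss_five_fourths]
    linarith [log_two_lt_d9, log_three_gt_d9]
  have hx73 : x ≤ 7 / 3 := by
    refine (klGauss_strictMonoOn.le_iff_le (zero_le_two.trans hx) (by norm_num)).1
      (hfx.trans ?_)
    rw [klGauss_seven_thirds]
    linarith [log_two_gt_d9, log_three_lt_d9, log_five_gt_d9]
  calc klGauss y / y ≤ klGauss (5 / 4) / (5 / 4) :=
        klGauss_div_monotoneOn ⟨hy, by linarith⟩ ⟨by norm_num, by norm_num⟩ hy54
    _ ≤ 21 / 100 := by
        rw [klGauss_five_fourths]
        linarith [log_two_gt_d9, log_three_lt_d9]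
    _ ≤ klGauss x / x := (le_div_iff₀ (by linarith)).2 (mul_le_klGauss_of_mem_Icc hx hx73)

lemma mul_le_mul_of_mul_eq_of_div_le {n N x y a b : ℝ} (hn : 0 ≤ n) (hx : 0 < x) (hy : 0 < y)
    (hb : 0 < b) (h : n * a = N * b) (hba : b / y ≤ a / x) : n * x ≤ N * y := by
  rw [div_le_div_iff₀ hy hx] at hba
  refine le_of_mul_le_mul_right ?_ hb
  calc n * x * b = n * (b * x) := by ring
    _ ≤ n * (a * y) := mul_le_mul_of_nonneg_left hba hn
    _ = N * y * b := by rw [← mul_assoc, h]; ring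

theorem stmt17 (ε : ℝ) (hε : 0 < ε) (hε' : ε ≤ 1 / 2) (N : ℕ) (hN : 1 ≤ N)
    (γ : ℕ → ℝ)
    (hγ : ∀ n : ℕ, 1 ≤ n → n ≤ N → 0 < γ n ∧
      (n : ℝ) * (Real.log (1 + γ n) - γ n / (1 + γ n)) = 2 * ε ^ 2) :
    ∀ n : ℕ, 1 ≤ n → n ≤ N → (n : ℝ) * γ n ≤ (N : ℝ) * γ N := by
  intro n hn hnN
  obtain ⟨hx, hfx⟩ := hγ n hn hnN
  obtain ⟨hy, hfy⟩ := hγ N hN le_rfl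
  change (n : ℝ) * klGauss (γ n) = _ at hfx
  change (N : ℝ) * klGauss (γ N) = _ at hfy
  rcases hnN.eq_or_lt with rfl | hlt
  · exact le_rfl
  have hn' : (1 : ℝ) ≤ n := by exact_mod_cast hn
  have hN' : (n : ℝ) + 1 ≤ N := by exact_mod_cast hlt
  have hc : 2 * ε ^ 2 ≤ 1 / 2 := by nlinarith
  have hfy0 := klGauss_pos hy
  have hyx : γ N ≤ γ n :=
    (klGauss_strictMonoOn.le_iff_le hy.le hx.le).1 (by nlinarith [klGauss_pos hx])
  refine mul_le_mul_of_mul_eq_of_div_le (by positivity) hx hy hfy0 (hfx.trans hfy.symm) ?_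
  rcases le_or_gt (γ n) 2 with h2 | h2
  · exact klGauss_div_monotoneOn ⟨hy, hyx.trans h2⟩ ⟨hx, h2⟩ hyx
  · exact klGauss_div_le_of_le_quarter hy (by nlinarith) h2.le (by nlinarith)
end

section
/- Fix ε > 0 and let γ(x) for x > 0 be the unique positive solution of x·(ln(1+γ) − γ/(1+γ)) = 2ε². Then x·γ(x) → ∞ as x → ∞; in particular the maximum allowable total power grows without bound in the blocklength. -/
theorem stmt18 (ε : ℝ) (hε : 0 < ε) (γ : ℝ → ℝ)
    (hγ : ∀ x : ℝ, 0 < x → 0 < γ x ∧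
      x * (Real.log (1 + γ x) - γ x / (1 + γ x)) = 2 * ε ^ 2) :
    Filter.Tendsto (fun x => x * γ x) Filter.atTop Filter.atTop := by
  have key : ∀ x : ℝ, 0 < x → Real.sqrt (2 * ε ^ 2 * x) ≤ x * γ x := by
    intro x hx
    obtain ⟨hg, heq⟩ := hγ x hx
    have h1 : (0:ℝ) < 1 + γ x := by linarith
    have hlog : Real.log (1 + γ x) ≤ γ x := by
      have := Real.log_le_sub_one_of_pos h1
      linarith
    have hfr : γ x - γ x / (1 + γ x) ≤ γ x ^ 2 := by
      have hd : γ x / (1 + γ x) * (1 + γ x) = γ x := div_mul_cancel₀ _ h1.ne'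
      have hdn : 0 ≤ γ x / (1 + γ x) := by positivity
      nlinarith
    have hf : Real.log (1 + γ x) - γ x / (1 + γ x) ≤ γ x ^ 2 := by linarith
    have h2 : 2 * ε ^ 2 ≤ x * γ x ^ 2 := by
      rw [← heq]
      have := mul_le_mul_of_nonneg_left hf hx.le
      linarith
    have h3 : 2 * ε ^ 2 * x ≤ (x * γ x) ^ 2 := by nlinarith
    calc Real.sqrt (2 * ε ^ 2 * x) ≤ Real.sqrt ((x * γ x) ^ 2) :=
          Real.sqrt_le_sqrt h3
      _ = x * γ x := Real.sqrt_sq (by positivity)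
  have htend : Filter.Tendsto (fun x : ℝ => Real.sqrt (2 * ε ^ 2 * x))
      Filter.atTop Filter.atTop := by
    have hs : Filter.Tendsto Real.sqrt Filter.atTop Filter.atTop := by
      apply Filter.tendsto_atTop_atTop.mpr
      intro b
      exact ⟨b ^ 2, fun a ha => by
        calc b ≤ |b| := le_abs_self b
          _ = Real.sqrt (b ^ 2) := (Real.sqrt_sq_eq_abs b).symm
          _ ≤ Real.sqrt a := Real.sqrt_le_sqrt ha⟩
    exact hs.comp
      (Filter.tendsto_id.const_mul_atTop (show (0:ℝ) < 2 * ε ^ 2 by positivity))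
  refine Filter.tendsto_atTop_mono' _ ?_ htend
  filter_upwards [Filter.eventually_gt_atTop 0] with x hx using key x hx
end
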